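/- arXiv:nlin/0206049 — 2 statements merged into one kernel-verified Lean document; each statement's English description precedes it below -/
import Mathlib

section
/- For an N-periodic dressing chain, the trace P(λ) = tr T(λ) of the transition matrix T(λ) = V_N(λ + β_{N−1}) ⋯ V_1(λ) and the upper-right entry B(λ) of T(λ) satisfy Ṗ(λ) = α B(λ) for every λ ∈ ℝ, where the dot is the x-derivative and α = Σ_{n=1}^N α_n. -/
/-- Adler's matrix V_n(λ) with rows (v_n, 1) and (λ + v_n², v_n), at position x. -/
noncomputable def adlerV (v : ℤ → ℝ → ℝ) (n : ℤ) (lam x : ℝ) : Matrix (Fin 2) (Fin 2) ℝ :=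
  !![v n x, 1; lam + (v n x) ^ 2, v n x]

/-- Partial transition matrix: `transT v α lam x k = V_k(λ+β_{k-1}) ⋯ V_2(λ+β_1) V_1(λ)`,
where β_k = α_1 + ⋯ + α_k. -/
noncomputable def transT (v : ℤ → ℝ → ℝ) (α : ℤ → ℝ) (lam x : ℝ) :
    ℕ → Matrix (Fin 2) (Fin 2) ℝ
  | 0 => 1
  | k + 1 =>
      adlerV v ((k : ℤ) + 1) (lam + ∑ i ∈ Finset.range k, α ((i : ℤ) + 1)) x
        * transT v α lam x k

/-- Zero-curvature matrix `U_n(λ)` at position x. -/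
noncomputable def adlerU (v : ℤ → ℝ → ℝ) (n : ℤ) (lam x : ℝ) : Matrix (Fin 2) (Fin 2) ℝ :=
  !![0, 1; (v n x) ^ 2 - deriv (v n) x + lam, 0]

/-- Entrywise product rule for 2×2 matrix valued functions. -/
lemma hasDerivAt_matrix_mul {f g : ℝ → Matrix (Fin 2) (Fin 2) ℝ}
    {A B : Matrix (Fin 2) (Fin 2) ℝ} {x : ℝ}
    (hf : ∀ i j, HasDerivAt (fun y => f y i j) (A i j) x)
    (hg : ∀ i j, HasDerivAt (fun y => g y i j) (B i j) x) :
    ∀ i j, HasDerivAt (fun y => (f y * g y) i j) ((A * g x + f x * B) i j) x := by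
  intro i j
  have h : HasDerivAt (fun y => f y i 0 * g y 0 j + f y i 1 * g y 1 j)
      (A i 0 * g x 0 j + f x i 0 * B 0 j + (A i 1 * g x 1 j + f x i 1 * B 1 j)) x :=
    ((hf i 0).mul (hg 0 j)).add ((hf i 1).mul (hg 1 j))
  have hfun : (fun y => (f y * g y) i j)
      = fun y => f y i 0 * g y 0 j + f y i 1 * g y 1 j := by
    funext y; simp [Matrix.mul_apply, Fin.sum_univ_two]
  rw [hfun]
  convert h using 1
  simp [Matrix.mul_apply, Matrix.add_apply, Fin.sum_univ_two]
  ring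

/-- Zero-curvature relation for a single Adler matrix. -/
lemma hasDerivAt_adlerV (v : ℤ → ℝ → ℝ) (α : ℤ → ℝ)
    (hsmooth : ∀ n : ℤ, ContDiff ℝ (⊤ : ℕ∞) (v n))
    (hchain : ∀ (n : ℤ) (x : ℝ),
      deriv (v n) x + deriv (v (n + 1)) x = (v (n + 1) x) ^ 2 - (v n x) ^ 2 + α n)
    (n : ℤ) (lam x : ℝ) :
    ∀ i j, HasDerivAt (fun y => adlerV v n lam y i j)
      ((adlerU v (n + 1) (lam + α n) x * adlerV v n lam x
        - adlerV v n lam x * adlerU v n lam x) i j) x := by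
  have hv : HasDerivAt (v n) (deriv (v n) x) x :=
    ((hsmooth n).differentiable (by simp) x).hasDerivAt
  have hd : deriv (v (n + 1)) x
      = (v (n + 1) x) ^ 2 - (v n x) ^ 2 + α n - deriv (v n) x := by
    linarith [hchain n x]
  have hM : adlerU v (n + 1) (lam + α n) x * adlerV v n lam x
      - adlerV v n lam x * adlerU v n lam x
      = !![deriv (v n) x, 0; 2 * v n x * deriv (v n) x, deriv (v n) x] := by
    ext i j
    fin_cases i <;> fin_cases j <;>
      simp [adlerU, adlerV, Matrix.mul_apply, Fin.sum_univ_two, hd] <;> ring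
  rw [hM]
  intro i j
  fin_cases i <;> fin_cases j
  · simpa [adlerV] using hv
  · simpa [adlerV] using hasDerivAt_const x (1 : ℝ)
  · simpa [adlerV] using ((hv.pow 2).const_add lam)
  · simpa [adlerV] using hv

/-- Zero-curvature relation for the partial transition matrices. -/
lemma hasDerivAt_transT (v : ℤ → ℝ → ℝ) (α : ℤ → ℝ)
    (hsmooth : ∀ n : ℤ, ContDiff ℝ (⊤ : ℕ∞) (v n))
    (hchain : ∀ (n : ℤ) (x : ℝ),
      deriv (v n) x + deriv (v (n + 1)) x = (v (n + 1) x) ^ 2 - (v n x) ^ 2 + α n)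
    (lam x : ℝ) (k : ℕ) :
    ∀ i j, HasDerivAt (fun y => transT v α lam y k i j)
      ((adlerU v ((k : ℤ) + 1) (lam + ∑ i ∈ Finset.range k, α ((i : ℤ) + 1)) x
          * transT v α lam x k
        - transT v α lam x k * adlerU v 1 lam x) i j) x := by
  induction k with
  | zero =>
      intro i j
      have hfun : (fun y => transT v α lam y 0 i j)
          = fun _ => (1 : Matrix (Fin 2) (Fin 2) ℝ) i j := by
        funext y; rw [transT]
      rw [hfun]
      have hc : HasDerivAt (fun _ : ℝ => (1 : Matrix (Fin 2) (Fin 2) ℝ) i j) 0 x :=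
        hasDerivAt_const x _
      convert hc using 1
      simp [transT]
  | succ k ih =>
      intro i j
      have hV := hasDerivAt_adlerV v α hsmooth hchain ((k : ℤ) + 1)
        (lam + ∑ i ∈ Finset.range k, α ((i : ℤ) + 1)) x
      have h := hasDerivAt_matrix_mul hV ih i j
      have hfun : (fun y => transT v α lam y (k + 1) i j)
          = fun y => (adlerV v ((k : ℤ) + 1) (lam + ∑ i ∈ Finset.range k, α ((i : ℤ) + 1)) y
              * transT v α lam y k) i j := by
        funext y; rw [transT]
      have hT1 : transT v α lam x (k + 1)
          = adlerV v ((k : ℤ) + 1) (lam + ∑ i ∈ Finset.range k, α ((i : ℤ) + 1)) x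
            * transT v α lam x k := by rw [transT]
      have hmat :
          adlerU v (((k + 1 : ℕ) : ℤ) + 1)
              (lam + ∑ i ∈ Finset.range (k + 1), α ((i : ℤ) + 1)) x
            * transT v α lam x (k + 1)
          - transT v α lam x (k + 1) * adlerU v 1 lam x
          = (adlerU v (((k : ℤ) + 1) + 1)
                ((lam + ∑ i ∈ Finset.range k, α ((i : ℤ) + 1)) + α ((k : ℤ) + 1)) x
              * adlerV v ((k : ℤ) + 1) (lam + ∑ i ∈ Finset.range k, α ((i : ℤ) + 1)) x
            - adlerV v ((k : ℤ) + 1) (lam + ∑ i ∈ Finset.range k, α ((i : ℤ) + 1)) x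
              * adlerU v ((k : ℤ) + 1) (lam + ∑ i ∈ Finset.range k, α ((i : ℤ) + 1)) x)
            * transT v α lam x k
          + adlerV v ((k : ℤ) + 1) (lam + ∑ i ∈ Finset.range k, α ((i : ℤ) + 1)) x
            * (adlerU v ((k : ℤ) + 1) (lam + ∑ i ∈ Finset.range k, α ((i : ℤ) + 1)) x
                * transT v α lam x k
              - transT v α lam x k * adlerU v 1 lam x) := by
        rw [hT1, Finset.sum_range_succ, ← add_assoc]
        push_cast
        noncomm_ring
      rw [hfun, hmat]
      exact h

/-- Ṗ(λ) = α B(λ), where P(λ) = tr T(λ), B(λ) is the upper-right entry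
of T(λ), and α = α_1 + ⋯ + α_N. -/
theorem dressing_chain_P_dot (N : ℕ) (hN : 3 ≤ N)
    (v : ℤ → ℝ → ℝ) (α : ℤ → ℝ)
    (hsmooth : ∀ n : ℤ, ContDiff ℝ (⊤ : ℕ∞) (v n))
    (hvper : ∀ n : ℤ, v (n + (N : ℤ)) = v n)
    (hαper : ∀ n : ℤ, α (n + (N : ℤ)) = α n)
    (hchain : ∀ (n : ℤ) (x : ℝ),
      deriv (v n) x + deriv (v (n + 1)) x = (v (n + 1) x) ^ 2 - (v n x) ^ 2 + α n) :
    ∀ (lam x : ℝ),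
      deriv (fun y => Matrix.trace (transT v α lam y N)) x
        = (∑ n ∈ Finset.range N, α ((n : ℤ) + 1)) * transT v α lam x N 0 1 := by
  intro lam x
  have hT := hasDerivAt_transT v α hsmooth hchain lam x N
  set M := adlerU v ((N : ℤ) + 1) (lam + ∑ i ∈ Finset.range N, α ((i : ℤ) + 1)) x
      * transT v α lam x N - transT v α lam x N * adlerU v 1 lam x with hMdef
  have htr : HasDerivAt (fun y => Matrix.trace (transT v α lam y N)) (M 0 0 + M 1 1) x := by
    have : HasDerivAt (fun y => transT v α lam y N 0 0 + transT v α lam y N 1 1)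
        (M 0 0 + M 1 1) x := (hT 0 0).add (hT 1 1)
    simpa [Matrix.trace, Fin.sum_univ_two] using this
  rw [htr.deriv]
  have h1 : v ((N : ℤ) + 1) = v 1 := by rw [add_comm]; exact hvper 1
  simp only [hMdef, adlerU, h1, Matrix.sub_apply, Matrix.mul_apply, Fin.sum_univ_two]
  simp [Matrix.cons_val_zero, Matrix.cons_val_one]
  ring
end

section
/- Let N ≥ 4, let f_1,...,f_{N−1} be commuting indeterminates, β_1,...,β_{N−2} real constants, and λ a parameter. Define F_m(λ) = ∏_{n=m}^{N−2} (1 + (λ + β_n) ∂²/∂f_n ∂f_{n+1}) applied to the monomial f_m f_{m+1} ⋯ f_{N−1}, for 1 ≤ m ≤ N−2, and F_{N−1}(λ) = f_{N−1}. Then the three-term recursion F_m(λ) = f_m F_{m+1}(λ) + (λ + β_m) F_{m+2}(λ) holds for 1 ≤ m ≤ N−3, and ∂F_m(λ)/∂f_m = F_{m+1}(λ) holds for 1 ≤ m ≤ N−2. -/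
/-!
The operators `1 + (λ + β_n) ∂_n ∂_{n+1}` with `n > m` neither involve `f_m` nor differentiate
in it, so they commute with multiplication by `f_m` and map polynomials free of `f_m` to such
polynomials. Hence `F_m = (1 + (λ + β_m) ∂_m ∂_{m+1}) (f_m F_{m+1})` with `F_{m+1}` free of `f_m`,
i.e. `F_m = f_m F_{m+1} + (λ + β_m) ∂_{m+1} F_{m+1}`. Differentiating in `f_m` gives
`∂_m F_m = F_{m+1}`, and using this at `m + 1` turns the formula into the three-term recursion.
-/

/-- The Veselov–Shabat operator 1 + (λ + β_n) ∂²/∂f_n ∂f_{n+1} on the polynomial ring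
in the variables f_1, f_2, … over ℝ[λ]. -/
noncomputable def vsOp (β : ℕ → ℝ) (n : ℕ) (p : MvPolynomial ℕ (Polynomial ℝ)) :
    MvPolynomial ℕ (Polynomial ℝ) :=
  p + MvPolynomial.C (Polynomial.X + Polynomial.C (β n)) *
      MvPolynomial.pderiv n (MvPolynomial.pderiv (n + 1) p)

/-- F_m(λ) = ∏_{n=m}^{N−2} (1 + (λ + β_n) ∂²/∂f_n ∂f_{n+1}) (f_m f_{m+1} ⋯ f_{N−1});
for m = N−1 this is just f_{N−1}. -/
noncomputable def vsF (β : ℕ → ℝ) (N m : ℕ) : MvPolynomial ℕ (Polynomial ℝ) :=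
  (List.range' m (N - 1 - m)).foldr (vsOp β)
    (∏ n ∈ Finset.Icc m (N - 1), MvPolynomial.X n)

open MvPolynomial

theorem MvPolynomial.pderiv_pderiv_comm {σ R : Type*} [CommSemiring R] (i j : σ)
    (p : MvPolynomial σ R) : pderiv i (pderiv j p) = pderiv j (pderiv i p) := by
  induction p using MvPolynomial.induction_on' with
  | add p q hp hq => simp only [map_add, hp, hq]
  | monomial s a =>
    classical
    rcases eq_or_ne i j with rfl | h
    · rfl
    · simp only [pderiv_monomial]
      rw [tsub_right_comm]
      congr 1
      rw [Finsupp.tsub_apply, Finsupp.tsub_apply,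
        Finsupp.single_eq_of_ne h, Finsupp.single_eq_of_ne h.symm, Nat.sub_zero, Nat.sub_zero]
      ring

theorem MvPolynomial.pderiv_prod_X_of_notMem {σ R : Type*} [CommSemiring R] {s : Finset σ}
    {k : σ} (hk : k ∉ s) : pderiv k (∏ n ∈ s, (X n : MvPolynomial σ R)) = 0 :=
  Finset.prod_induction _ (fun q => pderiv k q = 0)
    (fun p q hp hq => by rw [pderiv_mul, hp, hq, mul_zero, zero_mul, add_zero]) pderiv_one
    (fun _ hn => pderiv_X_of_ne (ne_of_mem_of_not_mem hn hk))

section VeselovShabat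

variable {β : ℕ → ℝ}

theorem pderiv_vsOp_eq_zero {k n : ℕ} {p : MvPolynomial ℕ (Polynomial ℝ)}
    (h : pderiv k p = 0) : pderiv k (vsOp β n p) = 0 := by
  rw [vsOp, map_add, h, pderiv_C_mul, pderiv_pderiv_comm k n, pderiv_pderiv_comm k (n + 1), h,
    map_zero, map_zero, mul_zero, add_zero]

theorem pderiv_foldr_vsOp_eq_zero {k : ℕ} (l : List ℕ) {p : MvPolynomial ℕ (Polynomial ℝ)}
    (h : pderiv k p = 0) : pderiv k (l.foldr (vsOp β) p) = 0 := by
  induction l with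
  | nil => exact h
  | cons _ _ ih => exact pderiv_vsOp_eq_zero ih

theorem pderiv_vsF_of_lt {N k m : ℕ} (hk : k < m) : pderiv k (vsF β N m) = 0 :=
  pderiv_foldr_vsOp_eq_zero _ (pderiv_prod_X_of_notMem (by simp only [Finset.mem_Icc]; omega))

theorem vsOp_X_mul {m n : ℕ} (h₁ : m ≠ n) (h₂ : m ≠ n + 1) (p : MvPolynomial ℕ (Polynomial ℝ)) :
    vsOp β n (X m * p) = X m * vsOp β n p := by
  rw [vsOp, vsOp, pderiv_mul, pderiv_X_of_ne h₂, zero_mul, zero_add, pderiv_mul,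
    pderiv_X_of_ne h₁]
  ring

theorem foldr_vsOp_X_mul {m : ℕ} (l : List ℕ) (hl : ∀ n ∈ l, m < n)
    (p : MvPolynomial ℕ (Polynomial ℝ)) :
    l.foldr (vsOp β) (X m * p) = X m * l.foldr (vsOp β) p := by
  induction l with
  | nil => rfl
  | cons a l ih =>
    have ha := hl a List.mem_cons_self
    rw [List.foldr_cons, List.foldr_cons, ih fun n hn => hl n (List.mem_cons_of_mem a hn)]
    exact vsOp_X_mul (by omega) (by omega) _

theorem vsF_eq_vsOp_X_mul {N m : ℕ} (hm : m + 2 ≤ N) :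
    vsF β N m = vsOp β m (X m * vsF β N (m + 1)) := by
  have hlen : N - 1 - m = N - 1 - (m + 1) + 1 := by omega
  have hIcc : Finset.Icc m (N - 1) = insert m (Finset.Icc (m + 1) (N - 1)) := by
    rw [Finset.Icc_add_one_left_eq_Ioc, Finset.Ioc_insert_left (by omega)]
  rw [vsF, hlen, List.range'_succ, List.foldr_cons, hIcc,
    Finset.prod_insert (by simp only [Finset.mem_Icc]; omega),
    foldr_vsOp_X_mul _ fun n hn => by rw [List.mem_range'_1] at hn; omega]
  rfl

theorem vsF_eq_X_mul_add_pderiv {N m : ℕ} (hm : m + 2 ≤ N) :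
    vsF β N m = X m * vsF β N (m + 1)
      + C (Polynomial.X + Polynomial.C (β m)) * pderiv (m + 1) (vsF β N (m + 1)) := by
  have hindep : pderiv m (vsF β N (m + 1)) = 0 := pderiv_vsF_of_lt m.lt_succ_self
  rw [vsF_eq_vsOp_X_mul hm, vsOp, pderiv_mul, pderiv_X_of_ne (by omega), zero_mul, zero_add,
    pderiv_mul, pderiv_X_self, pderiv_pderiv_comm m (m + 1), hindep, map_zero, mul_zero, one_mul,
    add_zero]

theorem pderiv_vsF_self {N m : ℕ} (hm : m + 2 ≤ N) :
    pderiv m (vsF β N m) = vsF β N (m + 1) := by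
  rw [vsF_eq_X_mul_add_pderiv hm, map_add, pderiv_mul, pderiv_X_self, pderiv_C_mul,
    pderiv_pderiv_comm m (m + 1), pderiv_vsF_of_lt m.lt_succ_self, map_zero, mul_zero,
    mul_zero, add_zero, one_mul, add_zero]

end VeselovShabat

theorem vsF_three_term_recursion_general (N : ℕ) (β : ℕ → ℝ) :
    (∀ m : ℕ, 1 ≤ m → m ≤ N - 3 →
      vsF β N m
        = MvPolynomial.X m * vsF β N (m + 1)
          + MvPolynomial.C (Polynomial.X + Polynomial.C (β m)) * vsF β N (m + 2)) ∧
    (∀ m : ℕ, 1 ≤ m → m ≤ N - 2 →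
      MvPolynomial.pderiv m (vsF β N m) = vsF β N (m + 1)) := by
  refine ⟨fun m hm₁ hm₂ => ?_, fun m hm₁ hm₂ => pderiv_vsF_self (by omega)⟩
  rw [vsF_eq_X_mul_add_pderiv (by omega), pderiv_vsF_self (by omega)]

/-- the three-term recursion F_m(λ) = f_m F_{m+1}(λ) + (λ+β_m) F_{m+2}(λ)
for 1 ≤ m ≤ N−3, and ∂F_m(λ)/∂f_m = F_{m+1}(λ) for 1 ≤ m ≤ N−2. -/
theorem vsF_three_term_recursion (N : ℕ) (hN : 4 ≤ N) (β : ℕ → ℝ) :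
    (∀ m : ℕ, 1 ≤ m → m ≤ N - 3 →
      vsF β N m
        = MvPolynomial.X m * vsF β N (m + 1)
          + MvPolynomial.C (Polynomial.X + Polynomial.C (β m)) * vsF β N (m + 2)) ∧
    (∀ m : ℕ, 1 ≤ m → m ≤ N - 2 →
      MvPolynomial.pderiv m (vsF β N m) = vsF β N (m + 1)) :=
  vsF_three_term_recursion_general N β
end
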